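/- Let φ be a formula of BndSCL, 𝔄 a suitable model and s a suitable assignment. Then 𝔄,s ⊨_ω φ (φ is true in 𝔄 under s in bounded semantics) if and only if there exists n ∈ ℕ such that 𝔄,s ⊨ Φⁿ_φ in first-order logic; equivalently, φ is weakly equivalent to the countable disjunction ⋁_{n∈ℕ} Φⁿ_φ of its approximants. -/

import Mathlib

/-
Common formalization of the logics SCL (static computation logic, unbounded
game-theoretic semantics) and BndSCL (bounded semantics), following the paper
"First-order logic with self-reference".

* Games are played on arbitrary (possibly infinite) arenas; plays are maximal
  walks; strategies are functions from finite walks (histories) to positions;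
  infinite plays, and finite plays ending at a dead end where `win` holds for
  neither player, are won by nobody.
* The semantic games are formalized with positions carrying the current
  (sub)formula, an environment binding each label symbol to the labelled
  formula it most recently named (this is the standard closure rendering of
  "reference formula of a claim-symbol occurrence"), the current assignment
  and the polarity (+ = true, − = false).  The bounded game additionally
  carries a clock value.
-/

set_option autoImplicit false

universe u

/-! ## Generic two-player games on (possibly infinite) arenas -/

inductive Player : Type
  | eloise : Player
  | abelard : Player
deriving DecidableEq

def Player.opp : Player → Player
  | .eloise => .abelard
  | .abelard => .eloise

/-- A game arena: an ownership function (corresponding to the partition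
`V = V₀ ∪ V₁`), an edge relation, and a predicate telling which player (if
any) wins a play ending at a given dead-end position. -/
structure GameArena (P : Type u) where
  turn : P → Player
  edge : P → P → Prop
  win : P → Player → Prop

namespace GameArena

variable {P : Type u} (A : GameArena P)

def DeadEnd (u : P) : Prop := ∀ x, ¬ A.edge u x

/-- `w` is a finite nonempty walk whose first element is `v`. -/
def IsWalkFrom (v : P) (w : List P) : Prop :=
  w.head? = some v ∧ List.Chain' A.edge w

/-- A finite (maximal) play from `v`: a walk whose last element is a dead end. -/
def IsFinitePlay (v : P) (w : List P) : Prop :=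
  A.IsWalkFrom v w ∧ ∀ u, w.getLast? = some u → A.DeadEnd u

/-- An infinite play from `v`. -/
def IsInfPlay (v : P) (f : ℕ → P) : Prop :=
  f 0 = v ∧ ∀ n, A.edge (f n) (f (n + 1))

/-- A strategy (a function from histories to positions) of player `pl` is
legal if it always prescribes a move along an edge whenever a move exists. -/
def LegalFor (pl : Player) (v : P) (σ : List P → P) : Prop :=
  ∀ w u, A.IsWalkFrom v w → w.getLast? = some u → A.turn u = pl →
    (∃ x, A.edge u x) → A.edge u (σ w)

/-- The strategy `σ` of player `pl` is followed in the finite play `w`. -/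
def FollowsFin (pl : Player) (σ : List P → P) (w : List P) : Prop :=
  ∀ q u x, (q ++ [x]) <+: w → q.getLast? = some u → A.turn u = pl → x = σ q

/-- The strategy `σ` of player `pl` is followed in the infinite play `f`. -/
def FollowsInf (pl : Player) (σ : List P → P) (f : ℕ → P) : Prop :=
  ∀ n, A.turn (f n) = pl →
    f (n + 1) = σ (List.ofFn fun i : Fin (n + 1) => f i)

/-- `σ` is a winning strategy of player `pl` from `v`: it is legal, every
finite maximal play following it ends in a dead end won by `pl`, and no
infinite play follows it (infinite plays are won by neither player). -/
def WinningStrategy (pl : Player) (v : P) (σ : List P → P) : Prop :=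
  A.LegalFor pl v σ ∧
  (∀ w, A.IsFinitePlay v w → A.FollowsFin pl σ w →
      ∃ u, w.getLast? = some u ∧ A.win u pl) ∧
  (∀ f, A.IsInfPlay v f → ¬ A.FollowsInf pl σ f)

def HasWinningStrategy (pl : Player) (v : P) : Prop :=
  ∃ σ : List P → P, A.WinningStrategy pl v σ

end GameArena

/-- A positional strategy: its moves depend only on the current position. -/
def Positional {P : Type u} (σ : List P → P) : Prop :=
  ∀ q q' : List P, q.getLast? = q'.getLast? → σ q = σ q'

/-! ## Syntax of SCL / BndSCL -/

/-- A purely relational vocabulary. -/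
structure Vocab : Type 1 where
  Rel : Type
  arity : Rel → ℕ

/-- Formulas of SCL / BndSCL over the vocabulary `V`.  Variables and label
symbols are natural numbers; `claim L` is the claim symbol `C_L` and
`lab L φ` is the labelled formula `L φ`. -/
inductive SCLFormula (V : Vocab) : Type
  | bot : SCLFormula V
  | eq (x y : ℕ) : SCLFormula V
  | rel (R : V.Rel) (args : Fin (V.arity R) → ℕ) : SCLFormula V
  | claim (L : ℕ) : SCLFormula V
  | not (φ : SCLFormula V) : SCLFormula V
  | and (φ ψ : SCLFormula V) : SCLFormula V
  | or (φ ψ : SCLFormula V) : SCLFormula V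
  | ex (x : ℕ) (φ : SCLFormula V) : SCLFormula V
  | all (x : ℕ) (φ : SCLFormula V) : SCLFormula V
  | lab (L : ℕ) (φ : SCLFormula V) : SCLFormula V

namespace SCLFormula

variable {V : Vocab}

/-- First-order atoms. -/
def IsFOAtom : SCLFormula V → Prop
  | .bot => True
  | .eq _ _ => True
  | .rel _ _ => True
  | _ => False

/-- Purely first-order formulas (no claim symbols, no label symbols). -/
def IsFO : SCLFormula V → Prop
  | .bot => True
  | .eq _ _ => True
  | .rel _ _ => True
  | .claim _ => False
  | .not φ => IsFO φ
  | .and φ ψ => IsFO φ ∧ IsFO ψ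
  | .or φ ψ => IsFO φ ∧ IsFO ψ
  | .ex _ φ => IsFO φ
  | .all _ φ => IsFO φ
  | .lab _ _ => False

/-- Free (individual) variables. -/
def freeVars : SCLFormula V → Finset ℕ
  | .bot => ∅
  | .eq x y => {x, y}
  | .rel _ a => Finset.image a Finset.univ
  | .claim _ => ∅
  | .not φ => freeVars φ
  | .and φ ψ => freeVars φ ∪ freeVars ψ
  | .or φ ψ => freeVars φ ∪ freeVars ψ
  | .ex x φ => freeVars φ \ {x}
  | .all x φ => freeVars φ \ {x}
  | .lab _ φ => freeVars φ

/-- All variables occurring in a formula (free or bound). -/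
def vars : SCLFormula V → Finset ℕ
  | .bot => ∅
  | .eq x y => {x, y}
  | .rel _ a => Finset.image a Finset.univ
  | .claim _ => ∅
  | .not φ => vars φ
  | .and φ ψ => vars φ ∪ vars ψ
  | .or φ ψ => vars φ ∪ vars ψ
  | .ex x φ => insert x (vars φ)
  | .all x φ => insert x (vars φ)
  | .lab _ φ => vars φ

/-- Sentences: formulas with no free variables. -/
def IsSentence (φ : SCLFormula V) : Prop := freeVars φ = ∅

end SCLFormula

/-! ## Structures and first-order (Tarski) satisfaction -/

/-- A (suitable) model for vocabulary `V`: a nonempty domain together with an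
interpretation of all relation symbols. -/
structure Struct (V : Vocab) where
  Dom : Type u
  dom_nonempty : Nonempty Dom
  interp : ∀ R : V.Rel, (Fin (V.arity R) → Dom) → Prop

attribute [instance] Struct.dom_nonempty

/-- Satisfaction of atoms (false on non-atoms). -/
def atomSat {V : Vocab} (M : Struct.{u} V) (s : ℕ → M.Dom) : SCLFormula V → Prop
  | .bot => False
  | .eq x y => s x = s y
  | .rel R a => M.interp R fun i => s (a i)
  | _ => False

/-- Standard (Tarski) first-order satisfaction.  It is only meaningful on
purely first-order formulas; claim symbols are interpreted as `False` and
label symbols are ignored. -/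
def FOSat {V : Vocab} (M : Struct.{u} V) : (ℕ → M.Dom) → SCLFormula V → Prop
  | _, .bot => False
  | s, .eq x y => s x = s y
  | s, .rel R a => M.interp R fun i => s (a i)
  | _, .claim _ => False
  | s, .not φ => ¬ FOSat M s φ
  | s, .and φ ψ => FOSat M s φ ∧ FOSat M s ψ
  | s, .or φ ψ => FOSat M s φ ∨ FOSat M s ψ
  | s, .ex x φ => ∃ a : M.Dom, FOSat M (Function.update s x a) φ
  | s, .all x φ => ∀ a : M.Dom, FOSat M (Function.update s x a) φ
  | s, .lab _ φ => FOSat M s φ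

/-! ## The evaluation games -/

/-- A position of the semantic game: the current formula, the environment
recording for each label symbol `L` the reference formula `L ψ` it currently
names, the current assignment, and the polarity (`true` = `+`). -/
structure SCLPos (V : Vocab) (D : Type u) : Type u where
  form : SCLFormula V
  env : ℕ → Option (SCLFormula V)
  asg : ℕ → D
  pol : Bool

/-- Which player moves at a given position. (At positions with at most one
successor the owner is irrelevant; we let Eloise own them.) -/
def posTurn {V : Vocab} {D : Type u} (p : SCLPos V D) : Player :=
  match p.form, p.pol with
  | .and _ _, true => .abelard
  | .and _ _, false => .eloise
  | .or _ _, true => .eloise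
  | .or _ _, false => .abelard
  | .all _ _, true => .abelard
  | .all _ _, false => .eloise
  | .ex _ _, true => .eloise
  | .ex _ _, false => .abelard
  | _, _ => .eloise

/-- Who wins a play ending at a given position: at an FO-atom position,
Eloise wins iff the atom's truth value agrees with the polarity, and Abelard
wins otherwise; plays ending anywhere else (e.g. at a claim symbol with no
reference formula, or with clock value 0) are won by neither player. -/
def posWin {V : Vocab} (M : Struct.{u} V) (p : SCLPos V M.Dom) : Player → Prop
  | .eloise => p.form.IsFOAtom ∧ (atomSat M p.asg p.form ↔ p.pol = true)
  | .abelard => p.form.IsFOAtom ∧ ¬ (atomSat M p.asg p.form ↔ p.pol = true)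

/-- Moves of the unbounded evaluation game `G_∞`. -/
inductive UStep {V : Vocab} (M : Struct.{u} V) :
    SCLPos V M.Dom → SCLPos V M.Dom → Prop
  | neg (φ : SCLFormula V) (e : ℕ → Option (SCLFormula V)) (s : ℕ → M.Dom) (b : Bool) :
      UStep M ⟨.not φ, e, s, b⟩ ⟨φ, e, s, !b⟩
  | andLeft (φ ψ : SCLFormula V) (e : ℕ → Option (SCLFormula V)) (s : ℕ → M.Dom) (b : Bool) :
      UStep M ⟨.and φ ψ, e, s, b⟩ ⟨φ, e, s, b⟩
  | andRight (φ ψ : SCLFormula V) (e : ℕ → Option (SCLFormula V)) (s : ℕ → M.Dom) (b : Bool) :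
      UStep M ⟨.and φ ψ, e, s, b⟩ ⟨ψ, e, s, b⟩
  | orLeft (φ ψ : SCLFormula V) (e : ℕ → Option (SCLFormula V)) (s : ℕ → M.Dom) (b : Bool) :
      UStep M ⟨.or φ ψ, e, s, b⟩ ⟨φ, e, s, b⟩
  | orRight (φ ψ : SCLFormula V) (e : ℕ → Option (SCLFormula V)) (s : ℕ → M.Dom) (b : Bool) :
      UStep M ⟨.or φ ψ, e, s, b⟩ ⟨ψ, e, s, b⟩
  | exStep (x : ℕ) (φ : SCLFormula V) (e : ℕ → Option (SCLFormula V)) (s : ℕ → M.Dom)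
      (b : Bool) (a : M.Dom) :
      UStep M ⟨.ex x φ, e, s, b⟩ ⟨φ, e, Function.update s x a, b⟩
  | allStep (x : ℕ) (φ : SCLFormula V) (e : ℕ → Option (SCLFormula V)) (s : ℕ → M.Dom)
      (b : Bool) (a : M.Dom) :
      UStep M ⟨.all x φ, e, s, b⟩ ⟨φ, e, Function.update s x a, b⟩
  | labStep (L : ℕ) (φ : SCLFormula V) (e : ℕ → Option (SCLFormula V)) (s : ℕ → M.Dom)
      (b : Bool) :
      UStep M ⟨.lab L φ, e, s, b⟩ ⟨φ, Function.update e L (some (.lab L φ)), s, b⟩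
  | claimStep (L : ℕ) (e : ℕ → Option (SCLFormula V)) (s : ℕ → M.Dom) (b : Bool)
      (χ : SCLFormula V) (h : e L = some χ) :
      UStep M ⟨.claim L, e, s, b⟩ ⟨χ, e, s, b⟩

/-- Moves of the `n`-bounded evaluation game: positions additionally carry a
clock value, which decreases by one exactly at jumps from a claim symbol to
its reference formula; a claim-symbol position with clock value `0` is a dead
end won by neither player. -/
inductive BStep {V : Vocab} (M : Struct.{u} V) :
    SCLPos V M.Dom × ℕ → SCLPos V M.Dom × ℕ → Prop
  | neg (φ : SCLFormula V) (e : ℕ → Option (SCLFormula V)) (s : ℕ → M.Dom) (b : Bool) (n : ℕ) :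
      BStep M (⟨.not φ, e, s, b⟩, n) (⟨φ, e, s, !b⟩, n)
  | andLeft (φ ψ : SCLFormula V) (e : ℕ → Option (SCLFormula V)) (s : ℕ → M.Dom) (b : Bool)
      (n : ℕ) : BStep M (⟨.and φ ψ, e, s, b⟩, n) (⟨φ, e, s, b⟩, n)
  | andRight (φ ψ : SCLFormula V) (e : ℕ → Option (SCLFormula V)) (s : ℕ → M.Dom) (b : Bool)
      (n : ℕ) : BStep M (⟨.and φ ψ, e, s, b⟩, n) (⟨ψ, e, s, b⟩, n)
  | orLeft (φ ψ : SCLFormula V) (e : ℕ → Option (SCLFormula V)) (s : ℕ → M.Dom) (b : Bool)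
      (n : ℕ) : BStep M (⟨.or φ ψ, e, s, b⟩, n) (⟨φ, e, s, b⟩, n)
  | orRight (φ ψ : SCLFormula V) (e : ℕ → Option (SCLFormula V)) (s : ℕ → M.Dom) (b : Bool)
      (n : ℕ) : BStep M (⟨.or φ ψ, e, s, b⟩, n) (⟨ψ, e, s, b⟩, n)
  | exStep (x : ℕ) (φ : SCLFormula V) (e : ℕ → Option (SCLFormula V)) (s : ℕ → M.Dom)
      (b : Bool) (n : ℕ) (a : M.Dom) :
      BStep M (⟨.ex x φ, e, s, b⟩, n) (⟨φ, e, Function.update s x a, b⟩, n)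
  | allStep (x : ℕ) (φ : SCLFormula V) (e : ℕ → Option (SCLFormula V)) (s : ℕ → M.Dom)
      (b : Bool) (n : ℕ) (a : M.Dom) :
      BStep M (⟨.all x φ, e, s, b⟩, n) (⟨φ, e, Function.update s x a, b⟩, n)
  | labStep (L : ℕ) (φ : SCLFormula V) (e : ℕ → Option (SCLFormula V)) (s : ℕ → M.Dom)
      (b : Bool) (n : ℕ) :
      BStep M (⟨.lab L φ, e, s, b⟩, n) (⟨φ, Function.update e L (some (.lab L φ)), s, b⟩, n)
  | claimStep (L : ℕ) (e : ℕ → Option (SCLFormula V)) (s : ℕ → M.Dom) (b : Bool)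
      (χ : SCLFormula V) (n : ℕ) (h : e L = some χ) :
      BStep M (⟨.claim L, e, s, b⟩, n + 1) (⟨χ, e, s, b⟩, n)

/-- The unbounded evaluation game `G_∞(𝔄, ·, ·)` as a game arena. -/
def gameU {V : Vocab} (M : Struct.{u} V) : GameArena (SCLPos V M.Dom) where
  turn := posTurn
  edge := UStep M
  win := posWin M

/-- The bounded evaluation games `G_n(𝔄, ·, ·)` (for all clock values `n`
simultaneously) as a game arena. -/
def gameB {V : Vocab} (M : Struct.{u} V) : GameArena (SCLPos V M.Dom × ℕ) where
  turn p := posTurn p.1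
  edge := BStep M
  win p := posWin M p.1

/-- The initial position of the evaluation game for `φ` under assignment `s`:
empty environment and positive polarity. -/
def initPos {V : Vocab} {D : Type u} (φ : SCLFormula V) (s : ℕ → D) : SCLPos V D :=
  ⟨φ, fun _ => none, s, true⟩

/-- Truth under the unbounded semantics (the logic SCL):
`𝔄,s ⊨ φ` iff Eloise has a winning strategy in `G_∞(𝔄,s,φ)`. -/
def SCLTrue {V : Vocab} (M : Struct.{u} V) (s : ℕ → M.Dom) (φ : SCLFormula V) : Prop :=
  (gameU M).HasWinningStrategy .eloise (initPos φ s)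

/-! ### The bounded game `G_ω` -/

/-- Positions of the game `G_ω`: the initial position (where Abelard picks a
number `n'`), the intermediate positions (where Eloise picks some `n ≥ n'`),
and the positions of the `n`-bounded games. -/
inductive GOPos (V : Vocab) (D : Type u) : Type u
  | start : GOPos V D
  | mid (n' : ℕ) : GOPos V D
  | inner (p : SCLPos V D) (clock : ℕ) : GOPos V D

inductive GOStep {V : Vocab} (M : Struct.{u} V) (φ : SCLFormula V) (s : ℕ → M.Dom) :
    GOPos V M.Dom → GOPos V M.Dom → Prop
  | abelardPick (n' : ℕ) : GOStep M φ s .start (.mid n')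
  | eloisePick (n' n : ℕ) (h : n' ≤ n) : GOStep M φ s (.mid n') (.inner (initPos φ s) n)
  | play (p q : SCLPos V M.Dom) (m k : ℕ) (h : BStep M (p, m) (q, k)) :
      GOStep M φ s (.inner p m) (.inner q k)

def goTurn {V : Vocab} {D : Type u} : GOPos V D → Player
  | .start => .abelard
  | .mid _ => .eloise
  | .inner p _ => posTurn p

def goWin {V : Vocab} (M : Struct.{u} V) : GOPos V M.Dom → Player → Prop
  | .inner p _, pl => posWin M p pl
  | _, _ => False

/-- The bounded evaluation game `G_ω(𝔄,s,φ)`: Abelard picks `n' ∈ ℕ`, then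
Eloise picks `n ≥ n'`, and then `G_n(𝔄,s,φ)` is played. -/
def gameOmega {V : Vocab} (M : Struct.{u} V) (φ : SCLFormula V) (s : ℕ → M.Dom) :
    GameArena (GOPos V M.Dom) where
  turn := goTurn
  edge := GOStep M φ s
  win := goWin M

/-- Truth under the bounded semantics (the logic BndSCL):
`𝔄,s ⊨_ω φ` iff Eloise has a winning strategy in `G_ω(𝔄,s,φ)`. -/
def BndTrue {V : Vocab} (M : Struct.{u} V) (s : ℕ → M.Dom) (φ : SCLFormula V) : Prop :=
  (gameOmega M φ s).HasWinningStrategy .eloise .start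

/-! ## Approximants -/

/-- Auxiliary structural recursion for approximants: `k` tells what to put in
place of a claim symbol.  Label symbols are deleted (while updating the
environment), and polarity is tracked through negations. -/
def approxCore {V : Vocab}
    (k : (ℕ → Option (SCLFormula V)) → Bool → ℕ → SCLFormula V) :
    (ℕ → Option (SCLFormula V)) → Bool → SCLFormula V → SCLFormula V
  | _, _, .bot => .bot
  | _, _, .eq x y => .eq x y
  | _, _, .rel R a => .rel R a
  | e, b, .claim L => k e b L
  | e, b, .not φ => .not (approxCore k e (!b) φ)
  | e, b, .and φ ψ => .and (approxCore k e b φ) (approxCore k e b ψ)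
  | e, b, .or φ ψ => .or (approxCore k e b φ) (approxCore k e b ψ)
  | e, b, .ex x φ => .ex x (approxCore k e b φ)
  | e, b, .all x φ => .all x (approxCore k e b φ)
  | e, b, .lab L φ => approxCore k (Function.update e L (some (.lab L φ))) b φ

/-- `approx n e b φ` unfolds each claim symbol of `φ` (in environment `e`,
under polarity `b`) through `n` jumps to reference formulas; claim symbols
reached with exhausted budget (or with no reference formula) are replaced by
`⊥` at positive occurrences and `⊤` (i.e. `¬⊥`) at negative occurrences, and
all label symbols are deleted. -/
def approx {V : Vocab} : ℕ → (ℕ → Option (SCLFormula V)) → Bool → SCLFormula V → SCLFormula V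
  | 0 => approxCore fun _ b _ => if b then .bot else .not .bot
  | n + 1 => approxCore fun e b L =>
      match e L with
      | some χ => approx n e b χ
      | none => if b then .bot else .not .bot

/-- The `n`-th approximant `Φⁿ_φ` of `φ`: the first-order formula obtained
from the `n`-th unfolding of `φ` by deleting all label symbols and replacing
positive claim occurrences by `⊥` and negative ones by `⊤`. -/
def approximant {V : Vocab} (φ : SCLFormula V) (n : ℕ) : SCLFormula V :=
  approx n (fun _ => none) true φ

/-!
`G_ω` is well founded (inside `G_n` every move shortens the formula or consumes clock), so Eloise
has a winning strategy exactly when the start lies in her attractor: the inductive set generated by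
her winning dead ends, her positions with a move into the set, and Abelard's positions all of whose
moves lead into it. By induction on the clock and then on the formula, Eloise is in the attractor
of `G_n` at `φ` with polarity `+` (resp. `−`) iff the depth-`n` approximant is true (resp. false):
claim symbols reached at clock `0` are dead ends won by nobody, which is what the replacement by `⊥`
and `⊤` records. Raising the clock keeps Eloise's positions winning, so Abelard's lower bound in
`G_ω` costs her nothing.
-/

namespace GameArena

variable {P : Type u} {A : GameArena P} {pl : Player}

inductive ForcesWin (A : GameArena P) (pl : Player) : P → Prop
  | deadEnd {v : P} : A.DeadEnd v → A.win v pl → ForcesWin A pl v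
  | move {v u : P} : A.turn v = pl → A.edge v u → ForcesWin A pl u → ForcesWin A pl v
  | oppMove {v : P} : A.turn v ≠ pl → (∃ u, A.edge v u) →
      (∀ u, A.edge v u → ForcesWin A pl u) → ForcesWin A pl v

lemma forcesWin_iff_of_deadEnd {v : P} (hv : A.DeadEnd v) : A.ForcesWin pl v ↔ A.win v pl := by
  refine ⟨fun h => ?_, .deadEnd hv⟩
  cases h with
  | deadEnd _ hw => exact hw
  | move _ he _ => exact absurd he (hv _)
  | oppMove _ he _ => exact absurd he.choose_spec (hv _)

lemma ForcesWin.win_of_deadEnd {v : P} (h : A.ForcesWin pl v) (hv : A.DeadEnd v) :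
    A.win v pl :=
  (forcesWin_iff_of_deadEnd hv).1 h

lemma forcesWin_iff_of_exists_edge {v : P} (hv : ∃ u, A.edge v u) :
    A.ForcesWin pl v ↔ if A.turn v = pl then ∃ u, A.edge v u ∧ A.ForcesWin pl u
      else ∀ u, A.edge v u → A.ForcesWin pl u := by
  constructor
  · intro h
    cases h with
    | deadEnd hd _ => exact absurd hv.choose_spec (hd _)
    | move ht he hw => rw [if_pos ht]; exact ⟨_, he, hw⟩
    | oppMove ht _ hall => rwa [if_neg ht]
  · split_ifs with ht
    · exact fun ⟨u, he, hw⟩ => .move ht he hw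
    · exact .oppMove ht hv

lemma IsWalkFrom.ne_nil {v : P} {w : List P} (h : A.IsWalkFrom v w) : w ≠ [] := by
  rintro rfl
  simp [IsWalkFrom] at h

lemma IsWalkFrom.concat {v u x : P} {w : List P} (h : A.IsWalkFrom v w)
    (hu : w.getLast? = some u) (he : A.edge u x) : A.IsWalkFrom v (w ++ [x]) := by
  refine ⟨by rw [List.head?_append, h.1]; rfl,
    List.isChain_append.2 ⟨h.2, List.isChain_singleton x, ?_⟩⟩
  rw [hu]
  rintro _ ⟨⟩ _ ⟨⟩
  exact he

lemma IsWalkFrom.of_concat {v x : P} {w : List P} (hw : w ≠ [])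
    (h : A.IsWalkFrom v (w ++ [x])) :
    A.IsWalkFrom v w ∧ ∃ u, w.getLast? = some u ∧ A.edge u x := by
  obtain ⟨hh, hc⟩ := h
  rw [List.head?_append, List.head?_eq_some_head hw] at hh
  obtain ⟨hc, -, hlast⟩ := List.isChain_append.1 hc
  refine ⟨⟨by rw [List.head?_eq_some_head hw]; simpa using hh, hc⟩, w.getLast hw,
    List.getLast?_eq_some_getLast hw, ?_⟩
  exact hlast _ (List.getLast?_eq_some_getLast hw) x rfl

lemma FollowsFin.of_concat {σ : List P → P} {w : List P} {x : P}
    (h : A.FollowsFin pl σ (w ++ [x])) : A.FollowsFin pl σ w :=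
  fun q u y hq => h q u y (hq.trans (List.prefix_append w [x]))

lemma FollowsFin.concat {σ : List P → P} {w : List P} {x : P}
    (h : A.FollowsFin pl σ w)
    (hx : ∀ u, w.getLast? = some u → A.turn u = pl → x = σ w) :
    A.FollowsFin pl σ (w ++ [x]) := by
  intro q u y hq
  rcases List.prefix_concat_iff.1 hq with heq | hq'
  · obtain ⟨rfl, hyx⟩ := List.append_inj' heq rfl
    cases hyx
    exact hx u
  · exact h q u y hq'

lemma FollowsFin.singleton (σ : List P → P) (v : P) : A.FollowsFin pl σ [v] := by
  intro q u y hq hu _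
  obtain rfl : q = [] := by simpa using hq.length_le
  simp at hu

lemma not_isInfPlay_of_acc {v : P} (hv : Acc (flip A.edge) v) (f : ℕ → P) :
    ¬ A.IsInfPlay v f := by
  rintro ⟨rfl, hf⟩
  suffices ∀ x, Acc (flip A.edge) x → ∀ n, f n ≠ x from this _ hv 0 rfl
  intro x hx
  induction hx with
  | intro y _ ih => rintro n rfl; exact ih _ (hf n) (n + 1) rfl

lemma WinningStrategy.forcesWin {v : P} {σ : List P → P} (hv : Acc (flip A.edge) v)
    (hσ : A.WinningStrategy pl v σ) : A.ForcesWin pl v := by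
  obtain ⟨hlegal, hfin, -⟩ := hσ
  suffices ∀ u, Acc (flip A.edge) u → ∀ w, A.IsWalkFrom v w → w.getLast? = some u →
      A.FollowsFin pl σ w → A.ForcesWin pl u from
    this v hv [v] ⟨rfl, List.isChain_singleton v⟩ rfl (.singleton σ v)
  intro u hu
  induction hu with
  | intro u _ ih =>
    intro w hw hu hfol
    by_cases hd : A.DeadEnd u
    · obtain ⟨u', hu', hwin⟩ := hfin w ⟨hw, by rw [hu]; rintro _ ⟨⟩; exact hd⟩ hfol
      rw [hu] at hu'
      cases hu'
      exact .deadEnd hd hwin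
    have hex : ∃ x, A.edge u x := by simpa [DeadEnd] using hd
    by_cases ht : A.turn u = pl
    · have he := hlegal w u hw hu ht hex
      exact .move ht he (ih _ he _ (hw.concat hu he) List.getLast?_concat
        (hfol.concat fun _ _ _ => rfl))
    · refine .oppMove ht hex fun x hx => ih x hx _ (hw.concat hu hx) List.getLast?_concat
        (hfol.concat ?_)
      intro u' hu' ht'
      rw [hu] at hu'
      cases hu'
      exact absurd ht' ht

lemma exists_move_keeping_forcesWin (u : P) : ∃ x, ((∃ y, A.edge u y) → A.edge u x) ∧
    ((∃ y, A.edge u y ∧ A.ForcesWin pl y) → A.ForcesWin pl x) := by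
  by_cases hwin : ∃ y, A.edge u y ∧ A.ForcesWin pl y
  · obtain ⟨y, he, hy⟩ := hwin
    exact ⟨y, fun _ => he, fun _ => hy⟩
  by_cases hex : ∃ y, A.edge u y
  · exact ⟨hex.choose, fun _ => hex.choose_spec, fun h => absurd h hwin⟩
  · exact ⟨u, fun h => absurd h hex, fun h => absurd h hwin⟩

lemma ForcesWin.hasWinningStrategy {v : P} (hv : Acc (flip A.edge) v)
    (hW : A.ForcesWin pl v) : A.HasWinningStrategy pl v := by
  choose σ₀ hσ₀ using exists_move_keeping_forcesWin (A := A) (pl := pl)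
  let σ : List P → P := fun w => σ₀ (w.getLast?.getD v)
  have hσ : ∀ w u, w.getLast? = some u → σ w = σ₀ u := by
    intro w u hu
    simp only [σ, hu, Option.getD_some]
  have hstay : ∀ w, A.IsWalkFrom v w → A.FollowsFin pl σ w →
      ∀ u, w.getLast? = some u → A.ForcesWin pl u := by
    intro w
    induction w using List.reverseRecOn with
    | nil => simp
    | append_singleton q x ih =>
      intro hw hfol u hu
      obtain rfl : x = u := by simpa using hu
      rcases eq_or_ne q [] with rfl | hq
      · obtain rfl : x = v := by simpa [IsWalkFrom] using hw.1
        exact hW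
      obtain ⟨hwq, u', hu', he⟩ := hw.of_concat hq
      have hstep := (forcesWin_iff_of_exists_edge ⟨x, he⟩).1 (ih hwq hfol.of_concat u' hu')
      by_cases ht : A.turn u' = pl
      · rw [if_pos ht] at hstep
        rw [hfol q u' x (List.prefix_refl _) hu' ht, hσ q u' hu']
        exact (hσ₀ u').2 hstep
      · rw [if_neg ht] at hstep
        exact hstep x he
  refine ⟨σ, fun w u _ hu _ hex => (hσ w u hu).symm ▸ (hσ₀ u).1 hex, ?_,
    fun f hf _ => not_isInfPlay_of_acc hv f hf⟩
  intro w hplay hfol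
  obtain ⟨u, hu⟩ := Option.ne_none_iff_exists'.1 (mt List.getLast?_eq_none_iff.1 hplay.1.ne_nil)
  exact ⟨u, hu, (hstay w hplay.1 hfol u hu).win_of_deadEnd (hplay.2 u hu)⟩

lemma hasWinningStrategy_iff_forcesWin {v : P} (hv : Acc (flip A.edge) v) :
    A.HasWinningStrategy pl v ↔ A.ForcesWin pl v :=
  ⟨fun ⟨_, hσ⟩ => hσ.forcesWin hv, ForcesWin.hasWinningStrategy hv⟩

lemma forcesWin_comap {Q : Type*} {B : GameArena Q} (f : P → Q)
    (hturn : ∀ p, B.turn (f p) = A.turn p) (hwin : ∀ p, B.win (f p) pl ↔ A.win p pl)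
    (hedge : ∀ p q, B.edge (f p) q ↔ ∃ p', A.edge p p' ∧ q = f p') {p : P} :
    B.ForcesWin pl (f p) ↔ A.ForcesWin pl p := by
  constructor
  · suffices ∀ v, B.ForcesWin pl v → ∀ p, v = f p → A.ForcesWin pl p from (this _ · p rfl)
    intro v h
    induction h with
    | deadEnd hd hw =>
      rintro p rfl
      exact .deadEnd (fun p' he => hd _ ((hedge p _).2 ⟨p', he, rfl⟩)) ((hwin p).1 hw)
    | move ht he _ ih =>
      rintro p rfl
      obtain ⟨p', he', rfl⟩ := (hedge p _).1 he
      exact .move (hturn p ▸ ht) he' (ih p' rfl)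
    | oppMove ht hex _ ih =>
      rintro p rfl
      obtain ⟨q, hq⟩ := hex
      obtain ⟨p', he', -⟩ := (hedge p q).1 hq
      exact .oppMove (hturn p ▸ ht) ⟨p', he'⟩
        fun p'' he'' => ih _ ((hedge p _).2 ⟨p'', he'', rfl⟩) p'' rfl
  · intro h
    induction h with
    | @deadEnd p hd hw =>
      refine .deadEnd (fun q hq => ?_) ((hwin p).2 hw)
      obtain ⟨p', he, -⟩ := (hedge p q).1 hq
      exact hd p' he
    | @move p _ ht he _ ih => exact .move ((hturn p).trans ht) ((hedge p _).2 ⟨_, he, rfl⟩) ih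
    | @oppMove p ht hex _ ih =>
      obtain ⟨p', he⟩ := hex
      refine .oppMove ((hturn p).trans_ne ht) ⟨_, (hedge p _).2 ⟨p', he, rfl⟩⟩ fun q hq => ?_
      obtain ⟨p'', he'', rfl⟩ := (hedge p q).1 hq
      exact ih p'' he''

end GameArena

section BoundedGame

variable {V : Vocab} {M : Struct.{u} V} {φ ψ : SCLFormula V} {e : ℕ → Option (SCLFormula V)}
  {s : ℕ → M.Dom} {b : Bool} {n : ℕ} {q : SCLPos V M.Dom × ℕ}

lemma not_bStep_of_isFOAtom {p : SCLPos V M.Dom} (hp : p.form.IsFOAtom) (n : ℕ) :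
    ¬ BStep M (p, n) q := by
  rintro ⟨⟩ <;> exact hp

lemma bStep_not_iff : BStep M (⟨.not φ, e, s, b⟩, n) q ↔ q = (⟨φ, e, s, !b⟩, n) := by
  constructor
  · rintro ⟨⟩; rfl
  · rintro rfl; constructor

lemma bStep_and_iff :
    BStep M (⟨.and φ ψ, e, s, b⟩, n) q ↔ q = (⟨φ, e, s, b⟩, n) ∨ q = (⟨ψ, e, s, b⟩, n) := by
  constructor
  · rintro ⟨⟩ <;> simp
  · rintro (rfl | rfl) <;> constructor

lemma bStep_or_iff :
    BStep M (⟨.or φ ψ, e, s, b⟩, n) q ↔ q = (⟨φ, e, s, b⟩, n) ∨ q = (⟨ψ, e, s, b⟩, n) := by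
  constructor
  · rintro ⟨⟩ <;> simp
  · rintro (rfl | rfl) <;> constructor

lemma bStep_ex_iff {x : ℕ} :
    BStep M (⟨.ex x φ, e, s, b⟩, n) q ↔ ∃ a, q = (⟨φ, e, Function.update s x a, b⟩, n) := by
  constructor
  · rintro ⟨⟩; exact ⟨_, rfl⟩
  · rintro ⟨a, rfl⟩; constructor

lemma bStep_all_iff {x : ℕ} :
    BStep M (⟨.all x φ, e, s, b⟩, n) q ↔ ∃ a, q = (⟨φ, e, Function.update s x a, b⟩, n) := by
  constructor
  · rintro ⟨⟩; exact ⟨_, rfl⟩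
  · rintro ⟨a, rfl⟩; constructor

lemma bStep_lab_iff {L : ℕ} :
    BStep M (⟨.lab L φ, e, s, b⟩, n) q ↔
      q = (⟨φ, Function.update e L (some (.lab L φ)), s, b⟩, n) := by
  constructor
  · rintro ⟨⟩; rfl
  · rintro rfl; constructor

lemma bStep_claim_iff {L : ℕ} :
    BStep M (⟨.claim L, e, s, b⟩, n) q ↔
      ∃ m χ, n = m + 1 ∧ e L = some χ ∧ q = (⟨χ, e, s, b⟩, m) := by
  constructor
  · rintro ⟨⟩; exact ⟨_, _, rfl, ‹_›, rfl⟩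
  · rintro ⟨m, χ, rfl, he, rfl⟩; exact .claimStep L e s b χ m he

end BoundedGame

section Clock

variable {V : Vocab} {M : Struct.{u} V}

lemma BStep.add_clock {p q : SCLPos V M.Dom} {n m : ℕ} (h : BStep M (p, n) (q, m)) (k : ℕ) :
    BStep M (p, n + k) (q, m + k) := by
  cases h with
  | claimStep _ _ _ _ _ _ he => rw [Nat.add_right_comm]; exact .claimStep _ _ _ _ _ _ he
  | _ => constructor

lemma BStep.exists_of_add_clock {p : SCLPos V M.Dom} {n k : ℕ} {q : SCLPos V M.Dom × ℕ}
    (h : BStep M (p, n + k) q) (hp : ∃ r, BStep M (p, n) r) :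
    ∃ r, BStep M (p, n) r ∧ q = (r.1, r.2 + k) := by
  obtain ⟨r, hr⟩ := hp
  cases hr with
  | claimStep L e s b χ m he =>
    rw [Nat.add_right_comm] at h
    cases h with
    | claimStep _ _ _ _ χ' _ he' =>
      obtain rfl : χ = χ' := Option.some_injective _ (he.symm.trans he')
      exact ⟨_, .claimStep L e s b χ m he, rfl⟩
  | _ => cases h <;> exact ⟨(_, n), by constructor, rfl⟩

lemma gameB_forcesWin_add_clock {p : SCLPos V M.Dom} {n : ℕ}
    (h : (gameB M).ForcesWin .eloise (p, n)) (k : ℕ) :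
    (gameB M).ForcesWin .eloise (p, n + k) := by
  suffices ∀ v, (gameB M).ForcesWin .eloise v → (gameB M).ForcesWin .eloise (v.1, v.2 + k) from
    this _ h
  intro v h
  induction h with
  | deadEnd _ hw => exact .deadEnd (fun _ => not_bStep_of_isFOAtom hw.1 _) hw
  | move ht he _ ih => exact .move ht (he.add_clock k) ih
  | oppMove ht hex _ ih =>
    obtain ⟨r, hr⟩ := hex
    refine .oppMove ht ⟨_, hr.add_clock k⟩ fun q hq => ?_
    obtain ⟨r', hr', rfl⟩ := BStep.exists_of_add_clock hq ⟨r, hr⟩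
    exact ih r' hr'

end Clock

section Approximants

variable {V : Vocab} {M : Struct.{u} V} {e : ℕ → Option (SCLFormula V)} {s : ℕ → M.Dom}
  {b : Bool} {n : ℕ}

lemma gameB_turn (p : SCLPos V M.Dom × ℕ) : (gameB M).turn p = posTurn p.1 := rfl

lemma gameB_edge : (gameB M).edge = BStep M := rfl

lemma fosat_iff_gameB_forcesWin_of_isFOAtom {φ : SCLFormula V} (hφ : φ.IsFOAtom) :
    FOSat M s φ ↔ ((gameB M).ForcesWin .eloise (⟨φ, e, s, b⟩, n) ↔ b = true) := by
  rw [GameArena.forcesWin_iff_of_deadEnd fun q => not_bStep_of_isFOAtom hφ n]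
  cases φ <;> first | exact hφ.elim | cases b <;> simp [gameB, posWin, atomSat, FOSat, hφ]

lemma gameB_forcesWin_claim_iff {L : ℕ} :
    (gameB M).ForcesWin .eloise (⟨.claim L, e, s, b⟩, n) ↔
      ∃ m χ, n = m + 1 ∧ e L = some χ ∧ (gameB M).ForcesWin .eloise (⟨χ, e, s, b⟩, m) := by
  by_cases hex : ∃ q, BStep M (⟨.claim L, e, s, b⟩, n) q
  · rw [GameArena.forcesWin_iff_of_exists_edge hex]
    simp only [gameB_turn, gameB_edge, posTurn, ↓reduceIte, bStep_claim_iff]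
    constructor
    · rintro ⟨_, ⟨m, χ, rfl, he, rfl⟩, h⟩
      exact ⟨m, χ, rfl, he, h⟩
    · rintro ⟨m, χ, rfl, he, h⟩
      exact ⟨_, ⟨m, χ, rfl, he, rfl⟩, h⟩
  · rw [GameArena.forcesWin_iff_of_deadEnd (not_exists.1 hex)]
    simp only [gameB, posWin, SCLFormula.IsFOAtom, false_and, false_iff, not_exists, not_and]
    rintro m χ rfl he -
    exact hex ⟨_, .claimStep L e s b χ m he⟩

lemma fosat_approxCore_iff (k : (ℕ → Option (SCLFormula V)) → Bool → ℕ → SCLFormula V)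
    (hk : ∀ e s b L, FOSat M s (k e b L) ↔
      ((gameB M).ForcesWin .eloise (⟨.claim L, e, s, b⟩, n) ↔ b = true))
    (φ : SCLFormula V) (e : ℕ → Option (SCLFormula V)) (s : ℕ → M.Dom) (b : Bool) :
    FOSat M s (approxCore k e b φ) ↔
      ((gameB M).ForcesWin .eloise (⟨φ, e, s, b⟩, n) ↔ b = true) := by
  induction φ generalizing e s b with
  | bot | eq | rel => exact fosat_iff_gameB_forcesWin_of_isFOAtom trivial
  | claim L => exact hk e s b L
  | not φ ih =>
    rw [GameArena.forcesWin_iff_of_exists_edge ⟨_, bStep_not_iff.2 rfl⟩]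
    cases b <;> simp [gameB_turn, gameB_edge, posTurn, bStep_not_iff, approxCore, FOSat, ih]
  | and φ ψ ihφ ihψ =>
    rw [GameArena.forcesWin_iff_of_exists_edge ⟨_, bStep_and_iff.2 (.inl rfl)⟩]
    cases b <;> simp [gameB_turn, gameB_edge, posTurn, bStep_and_iff, approxCore, FOSat, ihφ, ihψ]
  | or φ ψ ihφ ihψ =>
    rw [GameArena.forcesWin_iff_of_exists_edge ⟨_, bStep_or_iff.2 (.inl rfl)⟩]
    cases b <;> simp [gameB_turn, gameB_edge, posTurn, bStep_or_iff, approxCore, FOSat, ihφ, ihψ]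
    tauto
  | ex x φ ih =>
    rw [GameArena.forcesWin_iff_of_exists_edge ⟨_, bStep_ex_iff.2 ⟨Classical.arbitrary _, rfl⟩⟩]
    cases b <;> simp [gameB_turn, gameB_edge, posTurn, bStep_ex_iff, approxCore, FOSat, ih]
  | all x φ ih =>
    rw [GameArena.forcesWin_iff_of_exists_edge ⟨_, bStep_all_iff.2 ⟨Classical.arbitrary _, rfl⟩⟩]
    cases b <;> simp [gameB_turn, gameB_edge, posTurn, bStep_all_iff, approxCore, FOSat, ih]
  | lab L φ ih =>
    rw [GameArena.forcesWin_iff_of_exists_edge ⟨_, bStep_lab_iff.2 rfl⟩]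
    cases b <;> simp [gameB_turn, gameB_edge, posTurn, bStep_lab_iff, approxCore, ih]

lemma fosat_approx_iff (n : ℕ) (φ : SCLFormula V) (e : ℕ → Option (SCLFormula V))
    (s : ℕ → M.Dom) (b : Bool) :
    FOSat M s (approx n e b φ) ↔
      ((gameB M).ForcesWin .eloise (⟨φ, e, s, b⟩, n) ↔ b = true) := by
  induction n generalizing φ e s b with
  | zero =>
    refine fosat_approxCore_iff _ (fun e s b L => ?_) φ e s b
    cases b <;> simp [gameB_forcesWin_claim_iff, FOSat]
  | succ n ih =>
    refine fosat_approxCore_iff _ (fun e s b L => ?_) φ e s b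
    rw [gameB_forcesWin_claim_iff]
    cases he : e L with
    | none => cases b <;> simp [FOSat]
    | some χ => simpa [he] using ih χ e s b

lemma fosat_approximant_iff {φ : SCLFormula V} :
    FOSat M s (approximant φ n) ↔ (gameB M).ForcesWin .eloise (initPos φ s, n) := by
  simpa [approximant, initPos] using fosat_approx_iff n φ _ s true

end Approximants

section OmegaGame

variable {V : Vocab} {M : Struct.{u} V} {φ : SCLFormula V} {s : ℕ → M.Dom}
  {v : GOPos V M.Dom}

noncomputable def GOPos.rank {D : Type u} : GOPos V D → ℕ ×ₗ ℕ ×ₗ ℕ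
  | .start => toLex (2, toLex (0, 0))
  | .mid _ => toLex (1, toLex (0, 0))
  | .inner p n => toLex (0, toLex (n, sizeOf p.form))

lemma GOStep.rank_lt {w : GOPos V M.Dom} (h : GOStep M φ s v w) : w.rank < v.rank := by
  rcases h with _ | _ | ⟨_, _, _, _, h⟩
  · simp [GOPos.rank, Prod.Lex.toLex_lt_toLex]
  · simp [GOPos.rank, Prod.Lex.toLex_lt_toLex]
  · cases h <;> simp [GOPos.rank, Prod.Lex.toLex_lt_toLex] <;> omega

lemma gameOmega_wellFounded : WellFounded (flip (gameOmega M φ s).edge) :=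
  Subrelation.wf (fun h => GOStep.rank_lt h) (InvImage.wf GOPos.rank wellFounded_lt)

lemma gameOmega_turn : (gameOmega M φ s).turn v = goTurn v := rfl

lemma gameOmega_edge : (gameOmega M φ s).edge = GOStep M φ s := rfl

lemma goStep_start_iff : GOStep M φ s .start v ↔ ∃ n', v = .mid n' := by
  constructor
  · rintro ⟨⟩; exact ⟨_, rfl⟩
  · rintro ⟨n', rfl⟩; exact .abelardPick n'

lemma goStep_mid_iff {n' : ℕ} :
    GOStep M φ s (.mid n') v ↔ ∃ n, n' ≤ n ∧ v = .inner (initPos φ s) n := by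
  constructor
  · rintro ⟨⟩; exact ⟨_, ‹_›, rfl⟩
  · rintro ⟨n, hn, rfl⟩; exact .eloisePick n' n hn

lemma goStep_inner_iff {p : SCLPos V M.Dom} {m : ℕ} :
    GOStep M φ s (.inner p m) v ↔ ∃ r, BStep M (p, m) r ∧ v = .inner r.1 r.2 := by
  constructor
  · rintro ⟨⟩; exact ⟨_, ‹_›, rfl⟩
  · rintro ⟨r, h, rfl⟩; exact .play _ _ _ _ h

lemma gameOmega_forcesWin_inner_iff {p : SCLPos V M.Dom} {n : ℕ} :
    (gameOmega M φ s).ForcesWin .eloise (.inner p n) ↔ (gameB M).ForcesWin .eloise (p, n) :=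
  GameArena.forcesWin_comap (A := gameB M) (p := (p, n)) (fun r => GOPos.inner r.1 r.2)
    (fun _ => rfl) (fun _ => Iff.rfl) fun _ _ => goStep_inner_iff

lemma gameOmega_forcesWin_mid_iff {n' : ℕ} :
    (gameOmega M φ s).ForcesWin .eloise (.mid n') ↔
      ∃ n, n' ≤ n ∧ (gameB M).ForcesWin .eloise (initPos φ s, n) := by
  rw [GameArena.forcesWin_iff_of_exists_edge ⟨_, GOStep.eloisePick n' n' le_rfl⟩]
  simp [gameOmega_turn, gameOmega_edge, goTurn, goStep_mid_iff, gameOmega_forcesWin_inner_iff]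

lemma gameOmega_forcesWin_start_iff :
    (gameOmega M φ s).ForcesWin .eloise .start ↔
      ∀ n', ∃ n, n' ≤ n ∧ (gameB M).ForcesWin .eloise (initPos φ s, n) := by
  rw [GameArena.forcesWin_iff_of_exists_edge ⟨_, GOStep.abelardPick 0⟩]
  simp [gameOmega_turn, gameOmega_edge, goTurn, goStep_start_iff, gameOmega_forcesWin_mid_iff]

end OmegaGame

/-- `𝔄,s ⊨_ω φ` iff `𝔄,s ⊨ Φⁿ_φ` (in first-order logic)
for some `n ∈ ℕ`; i.e. `φ` is weakly equivalent to the countable disjunction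
`⋁_{n∈ℕ} Φⁿ_φ` of its approximants. -/
theorem bounded_truth_iff_some_approximant {V : Vocab} (φ : SCLFormula V)
    (M : Struct.{u} V) (s : ℕ → M.Dom) :
    BndTrue M s φ ↔ ∃ n : ℕ, FOSat M s (approximant φ n) := by
  rw [BndTrue, GameArena.hasWinningStrategy_iff_forcesWin (gameOmega_wellFounded.apply _),
    gameOmega_forcesWin_start_iff]
  simp only [fosat_approximant_iff]
  constructor
  · intro h
    obtain ⟨n, -, hn⟩ := h 0
    exact ⟨n, hn⟩
  · rintro ⟨n, hn⟩ n'
    exact ⟨n + n', Nat.le_add_left n' n, gameB_forcesWin_add_clock hn n'⟩
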